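/- arXiv:2411.13818 — 3 statements merged into one kernel-verified Lean document; each statement's English description precedes it below -/
import Mathlib

section
/- For any integers θ with 1 ≤ θ ≤ k, one has ∑_{α=1}^{k} cos(2παθ/k) · ζ(2, α/k) = (π²/6)(6θ² − 6kθ + k²). -/
open Real Finset

/-!
Split the Fourier series `∑_{n ≥ 1} cos (2πnx) / n² = π² (x² - x + 1/6)` (valid on `[0, 1]`,
the right side being `π² B₂(x)`) at `x = θ/k` according to the residue `α ∈ [1, k]` of `n` mod `k`.
On the class `n = km + α` the cosine is constantly `cos (2παθ/k)`, and
`∑_m 1/(km + α)² = ζ(2, α/k) / k²`; multiplying by `k²` gives the identity.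
-/

theorem hasSum_one_div_nat_sq_mul_cos {x : ℝ} (hx : x ∈ Set.Icc 0 1) :
    HasSum (fun n : ℕ => 1 / (n : ℝ) ^ 2 * cos (2 * π * n * x)) (π ^ 2 * (x ^ 2 - x + 6⁻¹)) := by
  convert hasSum_one_div_nat_pow_mul_cos one_ne_zero hx using 1
  · rfl
  rw [show (Polynomial.map (algebraMap ℚ ℝ) (Polynomial.bernoulli (2 * 1))).eval x =
    bernoulliFun 2 x from rfl, bernoulliFun_two, Nat.mul_one, Nat.factorial_two]
  push_cast
  ring

theorem tsum_nat_succ_eq_sum_Icc_tsum {R : Type*} [AddCommGroup R] [UniformSpace R]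
    [IsUniformAddGroup R] [CompleteSpace R] [T0Space R] {f : ℕ → R}
    (hf : Summable fun n ↦ f (n + 1)) {N : ℕ} (hN : N ≠ 0) :
    ∑' n, f (n + 1) = ∑ α ∈ Icc 1 N, ∑' m, f (N * m + α) := by
  obtain ⟨N, rfl⟩ := Nat.exists_eq_succ_of_ne_zero hN
  rw [Nat.sumByResidueClasses hf (N + 1), ← Finset.Ico_add_one_right_eq_Icc, sum_Ico_eq_sum_range,
    ← Fin.sum_univ_eq_sum_range (fun a ↦ ∑' m, f ((N + 1) * m + (1 + a)))]
  refine Fintype.sum_congr _ _ fun j ↦ tsum_congr fun m ↦ ?_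
  show f (j.val + (N + 1) * m + 1) = f ((N + 1) * m + (1 + j.val))
  rw [add_comm 1, ← add_assoc, add_comm j.val]

theorem cos_two_pi_mul_natCast_mul_add_mul_div (k m α θ : ℕ) (hk : k ≠ 0) :
    cos (2 * π * ((k * m + α : ℕ) : ℝ) * (θ / k)) = cos (2 * π * α * θ / k) := by
  have hk : (k : ℝ) ≠ 0 := Nat.cast_ne_zero.mpr hk
  have : 2 * π * ((k * m + α : ℕ) : ℝ) * (θ / k) = 2 * π * α * θ / k + (m * θ : ℕ) * (2 * π) := by
    push_cast
    field_simp
    ring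
  rw [this, cos_add_nat_mul_two_pi]

theorem one_div_add_div_sq (a b c : ℝ) (hc : c ≠ 0) :
    1 / (a + b / c) ^ 2 = c ^ 2 * (1 / (c * a + b) ^ 2) := by
  rw [add_div' _ _ _ hc, div_pow, one_div_div, mul_comm a, mul_one_div]

theorem stmt_3_general (k θ : ℕ) (hθk : θ ≤ k) :
    ∑ α ∈ Finset.Icc 1 k,
      Real.cos (2 * π * α * θ / k) * (∑' m : ℕ, 1 / ((m : ℝ) + (α : ℝ) / k) ^ 2) =
      π ^ 2 / 6 * (6 * (θ : ℝ) ^ 2 - 6 * k * θ + k ^ 2) := by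
  obtain rfl | hk := eq_or_ne k 0
  · obtain rfl : θ = 0 := Nat.le_zero.mp hθk
    simp
  have hk' : (k : ℝ) ≠ 0 := Nat.cast_ne_zero.mpr hk
  set f : ℕ → ℝ := fun n ↦ 1 / (n : ℝ) ^ 2 * cos (2 * π * n * (θ / k))
  have hx : (θ : ℝ) / k ∈ Set.Icc 0 1 :=
    ⟨by positivity, div_le_one_of_le₀ (by exact_mod_cast hθk) (Nat.cast_nonneg k)⟩
  have hfourier : HasSum (fun n ↦ f (n + 1)) (π ^ 2 * ((θ / k) ^ 2 - θ / k + 6⁻¹)) := by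
    simpa [f] using (hasSum_nat_add_iff' 1).mpr (hasSum_one_div_nat_sq_mul_cos hx)
  have hclass : ∀ α, ∑' m, f (k * m + α) =
      cos (2 * π * α * θ / k) * (∑' m : ℕ, 1 / ((m : ℝ) + (α : ℝ) / k) ^ 2) / k ^ 2 := by
    intro α
    simp only [f, cos_two_pi_mul_natCast_mul_add_mul_div _ _ _ _ hk, one_div_add_div_sq _ _ _ hk',
      tsum_mul_right, tsum_mul_left]
    push_cast
    field_simp
  calc _ = k ^ 2 * ∑ α ∈ Icc 1 k, ∑' m, f (k * m + α) := by
        rw [mul_sum]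
        refine sum_congr rfl fun α _ ↦ ?_
        rw [hclass]
        field_simp
    _ = k ^ 2 * (π ^ 2 * ((θ / k) ^ 2 - θ / k + 6⁻¹)) := by
        rw [← tsum_nat_succ_eq_sum_Icc_tsum hfourier.summable hk, hfourier.tsum_eq]
    _ = _ := by
        field_simp

/-- `∑_{α=1}^{k} cos(2παθ/k) · ζ(2, α/k) = (π²/6)(6θ² − 6kθ + k²)`, where
`ζ(2, a) = ∑_{m ≥ 0} 1/(m + a)²` is the Hurwitz zeta function at `s = 2`. -/
theorem stmt_3 (k θ : ℕ) (hθ₁ : 1 ≤ θ) (hθk : θ ≤ k) :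
    ∑ α ∈ Finset.Icc 1 k,
      Real.cos (2 * π * α * θ / k) * (∑' m : ℕ, 1 / ((m : ℝ) + (α : ℝ) / k) ^ 2) =
      π ^ 2 / 6 * (6 * (θ : ℝ) ^ 2 - 6 * k * θ + k ^ 2) :=
  stmt_3_general k θ hθk
end

section
/- For every positive integer k, ∑_{j=−k}^{k}(−1)^j q^{j(3j+1)/2} = ∑_{n=0}^{k} (−1)^n (q;q)_k q^{\binom{n}{2}+(k+1)n}/(q;q)_n. -/
/-!
Both sides satisfy the same recursion in `k`: passing from `k` to `k + 1` adds
`(-1)^(k+1) (q^((k+1)(3k+2)/2) + q^((k+1)(3k+4)/2))`. On the pentagonal side these are the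
terms `j = ±(k+1)`. On the other side, the `n`-th term for `k + 1` minus the `n`-th term for `k`
is `Φ(n+1) - Φ(n)` with `Φ(n) = (-1)^n (q^n;q)_(k-n+1) q^(C(n,2)+(k+1)n)`, so the difference
telescopes to `Φ(k+1)`; here `Φ(0) = 0` because of the factor `1 - q^0`.
-/

open Finset

section Shanks

variable {R : Type*} [CommRing R]

/-- `∏ i ∈ Icc (n + 1) k, (1 - q ^ i)` is `(q;q)_k / (q;q)_n`. -/
def shanksTerm (q : R) (k n : ℕ) : R :=
  (-1) ^ n * (∏ i ∈ Icc (n + 1) k, (1 - q ^ i)) * q ^ (n.choose 2 + (k + 1) * n)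

def shanksSum (q : R) (k : ℕ) : R :=
  ∑ n ∈ range (k + 1), shanksTerm q k n

def shanksPotential (q : R) (k n : ℕ) : R :=
  (-1) ^ n * (∏ i ∈ Icc n k, (1 - q ^ i)) * q ^ (n.choose 2 + (k + 1) * n)

lemma shanksPotential_zero (q : R) (k : ℕ) : shanksPotential q k 0 = 0 := by
  simp [shanksPotential, ← insert_Icc_add_one_left_eq_Icc (Nat.zero_le k)]

lemma shanksTerm_succ {q : R} {k n : ℕ} (hn : n ≤ k) :
    shanksTerm q (k + 1) n =
      shanksTerm q k n + (shanksPotential q k (n + 1) - shanksPotential q k n) := by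
  have hdrop :
      ∏ i ∈ Icc n k, (1 - q ^ i) = (1 - q ^ n) * ∏ i ∈ Icc (n + 1) k, (1 - q ^ i) := by
    rw [← insert_Icc_add_one_left_eq_Icc hn, prod_insert (by simp)]
  have hexp : (n + 1).choose 2 + (k + 1) * (n + 1) = n.choose 2 + (k + 1) * n + n + (k + 1) := by
    rw [Nat.choose_succ_succ, Nat.choose_one_right]; ring
  rw [shanksTerm, shanksTerm, shanksPotential, shanksPotential, hdrop,
    prod_Icc_succ_top (by omega), hexp,
    show n.choose 2 + (k + 1 + 1) * n = n.choose 2 + (k + 1) * n + n by ring]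
  simp only [pow_add, pow_succ]
  ring

lemma shanksSum_succ (q : R) (k : ℕ) :
    shanksSum q (k + 1) = shanksSum q k +
      (-1) ^ (k + 1) * (q ^ ((k + 1).choose 2 + (k + 1) * (k + 1)) +
        q ^ ((k + 1).choose 2 + (k + 2) * (k + 1))) := by
  have htel : ∑ n ∈ range (k + 1), shanksTerm q (k + 1) n =
      shanksSum q k + shanksPotential q k (k + 1) := by
    rw [sum_congr rfl fun n hn => shanksTerm_succ (Nat.lt_succ_iff.mp (mem_range.mp hn)),
      sum_add_distrib, sum_range_sub, shanksPotential_zero, sub_zero, shanksSum]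
  rw [shanksSum, sum_range_succ, htel, shanksPotential, shanksTerm]
  simp only [Icc_eq_empty_of_lt (Nat.lt_succ_self _), prod_empty]
  ring

end Shanks

section Pentagonal

variable {K : Type*} [Field K]

noncomputable def pentagonalSum (q : K) (k : ℕ) : K :=
  ∑ j ∈ Icc (-(k : ℤ)) k, (-1) ^ j * q ^ (j * (3 * j + 1) / 2).toNat

lemma two_mul_cast_choose_two_add_mul (m c : ℕ) :
    2 * ((m.choose 2 + c * m : ℕ) : ℤ) = m * (m - 1 + 2 * c) := by
  have h := Nat.cast_choose_two ℚ m
  have : (2 * ((m.choose 2 + c * m : ℕ) : ℚ)) = m * (m - 1 + 2 * c) := by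
    push_cast; rw [h]; ring
  exact_mod_cast this

lemma pentagonal_exponent_natCast (m : ℕ) :
    ((m : ℤ) * (3 * m + 1) / 2).toNat = m.choose 2 + (m + 1) * m := by
  rw [show (m : ℤ) * (3 * m + 1) = 2 * ((m.choose 2 + (m + 1) * m : ℕ) : ℤ) by
    rw [two_mul_cast_choose_two_add_mul]; push_cast; ring,
    Int.mul_ediv_cancel_left _ two_ne_zero, Int.toNat_natCast]

lemma pentagonal_exponent_neg_natCast (m : ℕ) :
    (-(m : ℤ) * (3 * -(m : ℤ) + 1) / 2).toNat = m.choose 2 + m * m := by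
  rw [show -(m : ℤ) * (3 * -(m : ℤ) + 1) = 2 * ((m.choose 2 + m * m : ℕ) : ℤ) by
    rw [two_mul_cast_choose_two_add_mul]; ring,
    Int.mul_ediv_cancel_left _ two_ne_zero, Int.toNat_natCast]

lemma Icc_neg_natCast_succ_eq_insert (k : ℕ) :
    Icc (-((k + 1 : ℕ) : ℤ)) (k + 1 : ℕ) =
      insert (-((k + 1 : ℕ) : ℤ)) (insert ((k + 1 : ℕ) : ℤ) (Icc (-(k : ℤ)) k)) := by
  ext x
  simp only [mem_Icc, mem_insert]
  omega

lemma pentagonalSum_succ (q : K) (k : ℕ) :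
    pentagonalSum q (k + 1) = pentagonalSum q k +
      (-1) ^ (k + 1) * (q ^ ((k + 1).choose 2 + (k + 1) * (k + 1)) +
        q ^ ((k + 1).choose 2 + (k + 2) * (k + 1))) := by
  have hneg : (-1 : K) ^ (-((k + 1 : ℕ) : ℤ)) = (-1) ^ (k + 1) := by
    rw [zpow_neg, zpow_natCast, ← inv_pow, inv_neg_one]
  rw [pentagonalSum, Icc_neg_natCast_succ_eq_insert, sum_insert (by simp; omega),
    sum_insert (by simp), hneg, zpow_natCast, pentagonal_exponent_neg_natCast,
    pentagonal_exponent_natCast, ← pentagonalSum]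
  ring

theorem pentagonalSum_eq_shanksSum (q : K) (k : ℕ) : pentagonalSum q k = shanksSum q k := by
  induction k with
  | zero => simp [pentagonalSum, shanksSum, shanksTerm]
  | succ k ih => rw [pentagonalSum_succ, shanksSum_succ, ih]

end Pentagonal

theorem stmt_8_general (k : ℕ) (q : ℂ) :
    ∑ j ∈ Finset.Icc (-(k : ℤ)) (k : ℤ),
        (-1 : ℂ) ^ j * q ^ (j * (3 * j + 1) / 2).toNat =
      ∑ n ∈ Finset.range (k + 1),
        (-1 : ℂ) ^ n * (∏ i ∈ Finset.Icc (n + 1) k, (1 - q ^ i)) *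
          q ^ (n.choose 2 + (k + 1) * n) :=
  pentagonalSum_eq_shanksSum q k

/-- Shanks' finite form of Euler's pentagonal number theorem:
`∑_{j=-k}^{k} (-1)^j q^{j(3j+1)/2} = ∑_{n=0}^{k} (-1)^n (q;q)_k q^{C(n,2)+(k+1)n}/(q;q)_n`,
where the quotient `(q;q)_k/(q;q)_n = ∏_{i=n+1}^{k}(1-q^i)` is a polynomial. -/
theorem stmt_8 (k : ℕ) (hk : 1 ≤ k) (q : ℂ) :
    ∑ j ∈ Finset.Icc (-(k : ℤ)) (k : ℤ),
        (-1 : ℂ) ^ j * q ^ (j * (3 * j + 1) / 2).toNat =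
      ∑ n ∈ Finset.range (k + 1),
        (-1 : ℂ) ^ n * (∏ i ∈ Finset.Icc (n + 1) k, (1 - q ^ i)) *
          q ^ (n.choose 2 + (k + 1) * n) :=
  stmt_8_general k q
end

section
/- Let a₁, a₂ be coprime positive integers with a₁a₂ > 1, and let p₂(n) be the number of partitions of n into parts a₁, a₂. Then n/(a₁a₂) − 1 ≤ p₂(n) ≤ n/(a₁a₂) + 1 for all n ≥ 0. -/
/-!
Every solution of `x * a₁ + y * a₂ = n` is determined by `x`, and `x` ranges over the
integers in `[0, n / a₁]` with `x * a₁ ≡ n [MOD a₂]`. Since `a₁` is invertible mod `a₂`,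
these form a single residue class mod `a₂`, so their number is `⌈(⌊n / a₁⌋ + 1 - c) / a₂⌉`
for some `c < a₂`, which lies within `1` of `n / (a₁ * a₂)`.
-/

open Finset

/-- `p₂ a₁ a₂ n` is the number of ways to write `n = x * a₁ + y * a₂`
with `x, y` nonnegative integers. -/
def p₂ (a₁ a₂ n : ℕ) : ℕ :=
  ((Finset.range (n + 1) ×ˢ Finset.range (n + 1)).filter
    (fun p => p.1 * a₁ + p.2 * a₂ = n)).card

theorem Nat.exists_modEq_iff_mul_modEq {a m : ℕ} [NeZero m] (h : a.Coprime m) (n : ℕ) :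
    ∃ c, ∀ x, x * a ≡ n [MOD m] ↔ x ≡ c [MOD m] := by
  let u := ZMod.unitOfCoprime a h
  refine ⟨((n : ZMod m) * ↑u⁻¹).val, fun x => ?_⟩
  rw [← ZMod.natCast_eq_natCast_iff, ← ZMod.natCast_eq_natCast_iff, ZMod.natCast_zmod_val,
    Units.eq_mul_inv_iff_mul_eq, ZMod.coe_unitOfCoprime, Nat.cast_mul]

theorem p₂_eq_card_filter_modEq {a₁ a₂ : ℕ} (ha₁ : 0 < a₁) (ha₂ : 0 < a₂) (n : ℕ) :
    p₂ a₁ a₂ n = #{x ∈ range (n / a₁ + 1) | x * a₁ ≡ n [MOD a₂]} := by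
  refine card_nbij' Prod.fst (fun x => (x, (n - x * a₁) / a₂)) ?_ ?_ ?_ ?_
  · rintro ⟨x, y⟩ hxy
    simp only [mem_coe, mem_filter, mem_product, mem_range] at hxy ⊢
    obtain ⟨-, rfl⟩ := hxy
    refine ⟨Nat.lt_succ_of_le ((Nat.le_div_iff_mul_le ha₁).2 (Nat.le_add_right _ _)), ?_⟩
    exact (Nat.add_mul_mod_self_right _ _ _).symm
  · intro x hx
    simp only [mem_coe, mem_filter, mem_product, mem_range] at hx ⊢
    have hle : x * a₁ ≤ n := (Nat.le_div_iff_mul_le ha₁).1 (Nat.le_of_lt_succ hx.1)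
    have hy := Nat.div_mul_cancel ((Nat.modEq_iff_dvd' hle).1 hx.2)
    have hx₁ := Nat.le_mul_of_pos_right x ha₁
    have hy₂ := Nat.le_mul_of_pos_right ((n - x * a₁) / a₂) ha₂
    refine ⟨⟨?_, ?_⟩, ?_⟩ <;> omega
  · rintro ⟨x, y⟩ hxy
    simp only [mem_coe, mem_filter, mem_product, mem_range] at hxy
    obtain ⟨-, rfl⟩ := hxy
    simp [Nat.mul_div_cancel _ ha₂]
  · intro x _
    rfl

theorem p₂_eq_ceil {a₁ a₂ : ℕ} (ha₁ : 0 < a₁) (ha₂ : 0 < a₂) (hcop : Nat.gcd a₁ a₂ = 1)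
    (n : ℕ) : ∃ c < a₂, (p₂ a₁ a₂ n : ℚ) = ⌈((n / a₁ + 1 : ℕ) - c : ℚ) / a₂⌉ := by
  have : NeZero a₂ := ⟨ha₂.ne'⟩
  obtain ⟨c, hc⟩ := Nat.exists_modEq_iff_mul_modEq hcop n
  refine ⟨c % a₂, Nat.mod_lt _ ha₂, ?_⟩
  rw [p₂_eq_card_filter_modEq ha₁ ha₂, ← Int.cast_natCast, ← Nat.count_modEq_card_eq_ceil _ ha₂,
    Nat.count_eq_card_filter_range]
  simp only [hc, Int.cast_natCast]

theorem div_mul_sub_one_le_ceil {a₁ a₂ c : ℕ} (ha₁ : 0 < a₁) (ha₂ : 0 < a₂) (hc : c ≤ a₂)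
    (n : ℕ) : (n : ℚ) / (a₁ * a₂) - 1 ≤ ⌈((n / a₁ + 1 : ℕ) - c : ℚ) / a₂⌉ := by
  have ha₁' : (0 : ℚ) < a₁ := by exact_mod_cast ha₁
  have ha₂' : (0 : ℚ) < a₂ := by exact_mod_cast ha₂
  have hc' : (c : ℚ) ≤ a₂ := by exact_mod_cast hc
  have hn : (n : ℚ) / a₁ ≤ (n / a₁ : ℕ) + 1 := by
    rw [div_le_iff₀ ha₁']
    exact_mod_cast (add_one_mul (n / a₁) a₁).symm ▸ (Nat.lt_div_mul_add ha₁).le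
  calc (n : ℚ) / (a₁ * a₂) - 1 = ((n : ℚ) / a₁ - a₂) / a₂ := by field_simp
    _ ≤ ((n / a₁ + 1 : ℕ) - c : ℚ) / a₂ :=
        div_le_div_of_nonneg_right (by push_cast; linarith) ha₂'.le
    _ ≤ _ := Int.le_ceil _

theorem ceil_le_div_mul_add_one {a₁ a₂ : ℕ} (ha₂ : 0 < a₂) (c n : ℕ) :
    (⌈((n / a₁ + 1 : ℕ) - c : ℚ) / a₂⌉ : ℚ) ≤ (n : ℚ) / (a₁ * a₂) + 1 := by
  have ha₂' : (0 : ℚ) < a₂ := by exact_mod_cast ha₂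
  set m := n / (a₁ * a₂)
  have hk : ((n / a₁ : ℕ) : ℚ) + 1 ≤ a₂ * (m + 1) := by
    exact_mod_cast (Nat.div_div_eq_div_mul n a₁ a₂ ▸ Nat.lt_mul_div_succ (n / a₁) ha₂)
  have hceil : ⌈((n / a₁ + 1 : ℕ) - c : ℚ) / a₂⌉ ≤ (m : ℤ) + 1 := by
    rw [Int.ceil_le, div_le_iff₀ ha₂']
    push_cast
    nlinarith
  calc _ ≤ (m : ℚ) + 1 := by exact_mod_cast hceil
    _ ≤ (n : ℚ) / (a₁ * a₂) + 1 := by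
        gcongr
        exact_mod_cast Nat.cast_div_le (α := ℚ) (m := n) (n := a₁ * a₂)

theorem stmt_14_general (a₁ a₂ : ℕ) (ha₁ : 0 < a₁) (ha₂ : 0 < a₂)
    (hcop : Nat.gcd a₁ a₂ = 1) (n : ℕ) :
    (n : ℚ) / (a₁ * a₂) - 1 ≤ (p₂ a₁ a₂ n : ℚ) ∧
      (p₂ a₁ a₂ n : ℚ) ≤ (n : ℚ) / (a₁ * a₂) + 1 := by
  obtain ⟨c, hc, hp⟩ := p₂_eq_ceil ha₁ ha₂ hcop n
  rw [hp]
  exact ⟨div_mul_sub_one_le_ceil ha₁ ha₂ hc.le n, ceil_le_div_mul_add_one ha₂ c n⟩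

theorem stmt_14 (a₁ a₂ : ℕ) (ha₁ : 0 < a₁) (ha₂ : 0 < a₂)
    (hcop : Nat.gcd a₁ a₂ = 1) (hprod : 1 < a₁ * a₂) (n : ℕ) :
    (n : ℚ) / (a₁ * a₂) - 1 ≤ (p₂ a₁ a₂ n : ℚ) ∧
      (p₂ a₁ a₂ n : ℚ) ≤ (n : ℚ) / (a₁ * a₂) + 1 :=
  stmt_14_general a₁ a₂ ha₁ ha₂ hcop n
end
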